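/- Let α in N^d be positive integers with a solution x* in {−1,1}^d to α·x* = 0. Set n := d+1 and v := (x*, 1) in R^n. Define, for i in [n−1], P_i := {(x,ξ_n) : −1 ≤ x_i ≤ 1, −2 ≤ ξ_j ≤ 2 for j ≠ i}, and P_n := {(x,ξ_n) : −2·1 ≤ x ≤ 2·1, 1 ≤ ξ_n ≤ 1, 0 ≤ 2α·x ≤ 1}. Then v lies in P := ∩_{i=1}^n P_i, and for each i in [n], v lies in a facet of P_i: namely v ∈ H(e_i, x*_i) ∩ P_i for i ≤ n−1, and v lies in the facet {(x,ξ_n) ∈ P_n : α·x = 0} of P_n. -/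

import Mathlib

/-- The axis-parallel brick `P_i` (for `i ≤ n-1`) of the Partition reduction. -/
def brickP (d : ℕ) (i : Fin d) : Set (EuclideanSpace ℝ (Fin (d + 1))) :=
  {y | (-1 ≤ y i.castSucc ∧ y i.castSucc ≤ 1) ∧
    ∀ j : Fin (d + 1), j ≠ i.castSucc → (-2 ≤ y j ∧ y j ≤ 2)}

/-- The slab polyhedron `P_n` of the Partition reduction. -/
def slabPn (d : ℕ) (α : Fin d → ℕ) : Set (EuclideanSpace ℝ (Fin (d + 1))) :=
  {y | (∀ i : Fin d, -2 ≤ y i.castSucc ∧ y i.castSucc ≤ 2) ∧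
    (1 ≤ y (Fin.last d) ∧ y (Fin.last d) ≤ 1) ∧
    (0 ≤ 2 * ∑ i, (α i : ℝ) * y i.castSucc ∧
      2 * ∑ i, (α i : ℝ) * y i.castSucc ≤ 1)}

/-
Every coordinate of `v = (x*, 1)` has absolute value at most `1`, which already puts `v` in each
brick `P_i`; the last coordinate is `1` and `α·x* = 0` is the Partition equation, which puts `v`
on the hyperplane `α·x = 0` inside the slab `P_n`. Facet membership for `P_i` is `v_i = x*_i`.
-/

lemma mem_brickP_of_forall_abs_le_one {d : ℕ} {y : EuclideanSpace ℝ (Fin (d + 1))}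
    (hy : ∀ j, |y j| ≤ 1) (i : Fin d) : y ∈ brickP d i := by
  refine ⟨abs_le.mp (hy _), fun j _ => abs_le.mp ?_⟩
  linarith [hy j]

lemma mem_slabPn_of_forall_abs_le_one {d : ℕ} (α : Fin d → ℕ)
    {y : EuclideanSpace ℝ (Fin (d + 1))} (hy : ∀ j, |y j| ≤ 1) (hlast : y (Fin.last d) = 1)
    (hdot : ∑ i, (α i : ℝ) * y i.castSucc = 0) : y ∈ slabPn d α := by
  refine ⟨fun i => abs_le.mp ?_, ⟨hlast.ge, hlast.le⟩, ?_⟩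
  · linarith [hy i.castSucc]
  · rw [hdot]
    norm_num

lemma abs_intCast_le_one_of_eq_one_or_eq_neg_one {z : ℤ} (hz : z = 1 ∨ z = -1) :
    |(z : ℝ)| ≤ 1 := by
  rcases hz with rfl | rfl <;> norm_num

theorem partition_solution_gives_mixed_point_general (d : ℕ) (α : Fin d → ℕ)
    (xstar : Fin d → ℤ)
    (hx : ∀ i, xstar i = 1 ∨ xstar i = -1)
    (hsol : ∑ i, (α i : ℤ) * xstar i = 0) :
    let v : EuclideanSpace ℝ (Fin (d + 1)) :=
      WithLp.toLp 2 (Fin.snoc (fun i => (xstar i : ℝ)) 1 : Fin (d + 1) → ℝ)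
    (v ∈ slabPn d α) ∧ (∀ i : Fin d, v ∈ brickP d i) ∧
      (∀ i : Fin d, v ∈ {y ∈ brickP d i | y i.castSucc = (xstar i : ℝ)}) ∧
      v ∈ {y ∈ slabPn d α | ∑ i, (α i : ℝ) * y i.castSucc = 0} := by
  intro v
  have hinit (i : Fin d) : v i.castSucc = xstar i := by simp [v]
  have hlast : v (Fin.last d) = 1 := by simp [v]
  have habs (j : Fin (d + 1)) : |v j| ≤ 1 := by
    refine Fin.lastCases ?_ (fun i => ?_) j
    · simp [hlast]
    · exact hinit i ▸ abs_intCast_le_one_of_eq_one_or_eq_neg_one (hx i)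
  have hdot : ∑ i, (α i : ℝ) * v i.castSucc = 0 := by
    simp only [hinit]
    exact_mod_cast hsol
  have hslab := mem_slabPn_of_forall_abs_le_one α habs hlast hdot
  have hbrick := mem_brickP_of_forall_abs_le_one habs
  exact ⟨hslab, hbrick, fun i => ⟨hbrick i, hinit i⟩, hslab, hdot⟩

/-- Given a Partition solution `x* ∈ {-1,1}^d` with `α·x* = 0`, the point
`v = (x*, 1)` lies in `P = P_n ∩ ⋂ᵢ P_i`, and for each `i` it lies in a facet of
`P_i` (namely `H(eᵢ, x*ᵢ) ∩ P_i`), and in the facet `{α·x = 0}` of `P_n`. -/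
theorem partition_solution_gives_mixed_point (d : ℕ) (α : Fin d → ℕ)
    (hα : ∀ i, 0 < α i) (xstar : Fin d → ℤ)
    (hx : ∀ i, xstar i = 1 ∨ xstar i = -1)
    (hsol : ∑ i, (α i : ℤ) * xstar i = 0) :
    let v : EuclideanSpace ℝ (Fin (d + 1)) :=
      WithLp.toLp 2 (Fin.snoc (fun i => (xstar i : ℝ)) 1 : Fin (d + 1) → ℝ)
    (v ∈ slabPn d α) ∧ (∀ i : Fin d, v ∈ brickP d i) ∧
      (∀ i : Fin d, v ∈ {y ∈ brickP d i | y i.castSucc = (xstar i : ℝ)}) ∧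
      v ∈ {y ∈ slabPn d α | ∑ i, (α i : ℝ) * y i.castSucc = 0} :=
  partition_solution_gives_mixed_point_general d α xstar hx hsol
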